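/- For all m, n, p, q ≥ 1: the p-fold iterated derived set L^p(n ⊗ T_m) contains at least q pairwise distinct points if and only if either p + 1 < m, or p + 1 = m and q ≤ n. -/
import Mathlib

/-- The toy spread `T_n`. -/
def toy (n : ℕ) : Set (ℕ → ℕ) :=
  {α | ∀ i : ℕ, α i ≤ α (i + 1) ∧ α i < n}

/-- `⟨i⟩∗X`: the set of sequences beginning with `i` whose tail lies in `X`. -/
def consSet (i : ℕ) (X : Set (ℕ → ℕ)) : Set (ℕ → ℕ) :=
  {β | β 0 = i ∧ (fun k => β (k + 1)) ∈ X}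

/-- `n ⊗ T_m`. -/
def nOtimes (n m : ℕ) : Set (ℕ → ℕ) :=
  ⋃ i < n, consSet i (toy m)

/-- The derived set (set of limit/accumulation points) of `F` in Baire space. -/
def dSet (F : Set (ℕ → ℕ)) : Set (ℕ → ℕ) :=
  {α | ∀ U ∈ nhds α, ∃ β ∈ F, β ∈ U ∧ β ≠ α}

lemma mem_nhds_cyl {α : ℕ → ℕ} {U : Set (ℕ → ℕ)} :
    U ∈ nhds α ↔ ∃ N : ℕ, ∀ β : ℕ → ℕ, (∀ i < N, β i = α i) → β ∈ U := by
  constructor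
  · intro hU
    obtain ⟨V, hVU, hVopen, hαV⟩ := mem_nhds_iff.1 hU
    obtain ⟨s, ⟨x, N, rfl⟩, hxs, hsub⟩ :=
      (PiNat.isTopologicalBasis_cylinders (fun _ : ℕ => ℕ)).exists_subset_of_mem_open hαV hVopen
    refine ⟨N, fun β hβ => hVU (hsub ?_)⟩
    rw [← PiNat.mem_cylinder_iff_eq.1 hxs]
    exact PiNat.mem_cylinder_iff.2 hβ
  · rintro ⟨N, hN⟩
    refine Filter.mem_of_superset ((PiNat.isOpen_cylinder (fun _ : ℕ => ℕ) α N).mem_nhds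
      (PiNat.self_mem_cylinder α N)) ?_
    intro β hβ
    exact hN β (PiNat.mem_cylinder_iff.1 hβ)

lemma dSet_empty : dSet ∅ = ∅ := by
  ext α; simp only [dSet, Set.mem_setOf_eq, Set.mem_empty_iff_false, iff_false]
  intro h
  obtain ⟨β, hβ, -, -⟩ := h Set.univ Filter.univ_mem
  exact hβ

lemma dSet_union (A B : Set (ℕ → ℕ)) : dSet (A ∪ B) = dSet A ∪ dSet B := by
  ext α
  constructor
  · intro h
    by_contra hc
    simp only [Set.mem_union, not_or, dSet, Set.mem_setOf_eq, not_forall] at hc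
    obtain ⟨⟨U, hU, hUA⟩, ⟨V, hV, hVB⟩⟩ := hc
    push_neg at hUA hVB
    obtain ⟨β, hβ, hβUV, hβα⟩ := h (U ∩ V) (Filter.inter_mem hU hV)
    cases hβ with
    | inl hA => exact hβα (hUA β hA hβUV.1)
    | inr hB => exact hβα (hVB β hB hβUV.2)
  · rintro (h | h) U hU
    · obtain ⟨β, hβ, h1, h2⟩ := h U hU; exact ⟨β, Or.inl hβ, h1, h2⟩
    · obtain ⟨β, hβ, h1, h2⟩ := h U hU; exact ⟨β, Or.inr hβ, h1, h2⟩

lemma dSet_consSet (i : ℕ) (X : Set (ℕ → ℕ)) : dSet (consSet i X) = consSet i (dSet X) := by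
  ext α
  constructor
  · intro h
    have hα0 : α 0 = i := by
      by_contra hne
      obtain ⟨β, ⟨hβ0, -⟩, hβU, -⟩ := h {γ | γ 0 = α 0}
        (mem_nhds_cyl.2 ⟨1, fun β hβ => hβ 0 one_pos⟩)
      exact hne (hβU ▸ hβ0)
    refine ⟨hα0, fun U hU => ?_⟩
    obtain ⟨N, hN⟩ := mem_nhds_cyl.1 hU
    obtain ⟨β, ⟨hβ0, hβX⟩, hβcyl, hβα⟩ := h {γ | ∀ j < N + 1, γ j = α j}
      (mem_nhds_cyl.2 ⟨N + 1, fun β hβ => hβ⟩)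
    refine ⟨fun k => β (k + 1), hβX, hN _ fun j hj => hβcyl (j + 1) (by omega), ?_⟩
    intro htail
    apply hβα
    funext k
    cases k with
    | zero => rw [hβ0, hα0]
    | succ k => exact congrFun htail k
  · rintro ⟨hα0, htail⟩ U hU
    obtain ⟨N, hN⟩ := mem_nhds_cyl.1 hU
    obtain ⟨γ, hγX, hγcyl, hγne⟩ := htail {δ | ∀ j < N, δ j = α (j + 1)}
      (mem_nhds_cyl.2 ⟨N, fun δ hδ => hδ⟩)
    refine ⟨fun k => Nat.casesOn k i γ, ⟨rfl, hγX⟩, hN _ fun j hj => ?_, ?_⟩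
    · cases j with
      | zero => exact hα0.symm
      | succ j => exact hγcyl j (by omega)
    · intro heq
      apply hγne
      funext k
      exact congrFun heq (k + 1)

lemma toy_zero : toy 0 = ∅ := by
  ext α; simp only [toy, Set.mem_setOf_eq, Set.mem_empty_iff_false, iff_false]
  intro h; exact Nat.not_lt_zero _ (h 0).2

lemma toy_mono {α : ℕ → ℕ} {k : ℕ} (h : α ∈ toy k) : Monotone α :=
  monotone_nat_of_le_succ fun i => (h i).1

lemma dSet_toy (k : ℕ) : dSet (toy k) = toy (k - 1) := by
  rcases Nat.eq_zero_or_pos k with rfl | hk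
  · rw [toy_zero, dSet_empty]
  ext α
  constructor
  · intro h
    have mem : ∀ i, α i ≤ α (i + 1) ∧ α i < k := by
      intro i
      obtain ⟨β, hβ, hβcyl, -⟩ := h {γ | ∀ j < i + 2, γ j = α j}
        (mem_nhds_cyl.2 ⟨i + 2, fun β hβ => hβ⟩)
      have h1 := hβcyl i (by omega)
      have h2 := hβcyl (i + 1) (by omega)
      constructor
      · rw [← h1, ← h2]; exact (hβ i).1
      · rw [← h1]; exact (hβ i).2
    have hαmono : Monotone α := monotone_nat_of_le_succ fun i => (mem i).1
    intro i
    refine ⟨(mem i).1, ?_⟩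
    by_contra hge
    push_neg at hge
    have hi : α i = k - 1 := by
      have := (mem i).2; omega
    obtain ⟨β, hβ, hβcyl, hβne⟩ := h {γ | ∀ j < i + 1, γ j = α j}
      (mem_nhds_cyl.2 ⟨i + 1, fun β hβ => hβ⟩)
    apply hβne
    have hβmono : Monotone β := monotone_nat_of_le_succ fun j => (hβ j).1
    have hβi : β i = k - 1 := by rw [hβcyl i (by omega), hi]
    funext j
    rcases Nat.lt_or_ge j (i + 1) with h' | h'
    · exact hβcyl j h'
    · have h1 : β i ≤ β j := hβmono (by omega)
      have h2 : β j < k := (hβ j).2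
      have h3 : α i ≤ α j := hαmono (by omega)
      have h4 : α j < k := (mem j).2
      omega
  · intro hα U hU
    have hk2 : 2 ≤ k := by
      have := (hα 0).2; omega
    obtain ⟨N, hN⟩ := mem_nhds_cyl.1 hU
    refine ⟨fun j => if j < N then α j else k - 1, ?_, hN _ fun j hj => by simp [hj], ?_⟩
    · intro j
      have hj1 := (hα j).1
      have hj2 := (hα j).2
      have hj3 := (hα (j + 1)).2
      constructor
      · by_cases h1 : j < N <;> by_cases h2 : j + 1 < N <;> simp only [h1, h2, if_true,
          if_false, if_neg, if_pos] <;> omega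
      · by_cases h1 : j < N <;> simp only [h1, if_true, if_false, if_neg, if_pos] <;> omega
    · intro heq
      have h1 := congrFun heq N
      simp only [lt_irrefl, if_false] at h1
      have := (hα N).2
      omega

lemma nOtimes_zero (m : ℕ) : nOtimes 0 m = ∅ := by
  simp [nOtimes]

lemma dSet_nOtimes (n k : ℕ) : dSet (nOtimes n k) = nOtimes n (k - 1) := by
  induction n with
  | zero => rw [nOtimes_zero, dSet_empty, nOtimes_zero]
  | succ n ih =>
    have step : ∀ m, nOtimes (n + 1) m = nOtimes n m ∪ consSet n (toy m) := fun m =>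
      Set.biUnion_lt_succ _ _
    rw [step, dSet_union, ih, dSet_consSet, dSet_toy, step]

lemma iter_dSet (n m p : ℕ) : dSet^[p] (nOtimes n m) = nOtimes n (m - p) := by
  induction p with
  | zero => simp
  | succ p ih =>
    rw [Function.iterate_succ_apply', ih, dSet_nOtimes, Nat.sub_sub]

theorem iterated_dSet_nOtimes_atLeast (m n p q : ℕ)
    (hm : 1 ≤ m) (hn : 1 ≤ n) (hp : 1 ≤ p) (hq : 1 ≤ q) :
    (∃ f : Fin q → (ℕ → ℕ), Function.Injective f ∧ ∀ i, f i ∈ dSet^[p] (nOtimes n m)) ↔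
      (p + 1 < m ∨ (p + 1 = m ∧ q ≤ n)) := by
  rw [iter_dSet]
  rcases lt_trichotomy (p + 1) m with hlt | heq | hgt
  · -- infinitely many points: m - p ≥ 2
    have hmp : 2 ≤ m - p := by omega
    constructor
    · intro _; exact Or.inl hlt
    · intro _
      refine ⟨fun j k => if k ≤ (j : ℕ) + 1 then 0 else 1, ?_, ?_⟩
      · intro a b hab
        apply Fin.ext
        by_contra hne
        have h1 := congrFun hab ((a : ℕ) + 2)
        have h2 := congrFun hab ((b : ℕ) + 2)
        simp only at h1 h2
        split_ifs at h1 h2 <;> omega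
      · intro j
        refine Set.mem_biUnion (show (0 : ℕ) < n from hn) ⟨by simp, fun k => ?_⟩
        simp only
        constructor
        · split_ifs <;> omega
        · split_ifs <;> omega
  · -- exactly n points: m - p = 1
    have hmp : m - p = 1 := by omega
    rw [hmp]
    have htail : ∀ β : ℕ → ℕ, β ∈ nOtimes n 1 → (β 0 < n ∧ ∀ k, β (k + 1) = 0) := by
      intro β hβ
      obtain ⟨h0, ht⟩ := by simpa [nOtimes, consSet, toy] using hβ
      exact ⟨h0, fun k => (ht k).2⟩
    constructor
    · rintro ⟨f, hinj, hmem⟩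
      refine Or.inr ⟨by omega, ?_⟩
      have hg : ∀ a b : Fin q, f a 0 = f b 0 → a = b := by
        intro a b hab
        apply hinj
        funext k
        cases k with
        | zero => exact hab
        | succ k => rw [(htail _ (hmem a)).2 k, (htail _ (hmem b)).2 k]
      simpa using Fintype.card_le_of_injective
        (fun j : Fin q => (⟨f j 0, (htail _ (hmem j)).1⟩ : Fin n))
        (fun a b hab => hg a b (congrArg Fin.val hab))
    · rintro (h | ⟨-, hqn⟩)
      · omega
      refine ⟨fun j k => if k = 0 then (j : ℕ) else 0, ?_, ?_⟩
      · intro a b hab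
        have := congrFun hab 0
        simp only [if_pos rfl] at this
        exact Fin.ext this
      · intro j
        refine Set.mem_biUnion (show (j : ℕ) < n by omega) ⟨by simp, fun k => by simp⟩
  · -- empty: m ≤ p
    have hmp : m - p = 0 := by omega
    rw [hmp]
    have hempty : nOtimes n 0 = ∅ := by
      simp [nOtimes, consSet, toy_zero]
    rw [hempty]
    constructor
    · rintro ⟨f, -, hmem⟩
      exact absurd (hmem ⟨0, hq⟩) (Set.notMem_empty _)
    · rintro (h | ⟨h, -⟩) <;> omega
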